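/- Consider horizon T ≥ 1 and the COLDQ setup with strongly convex losses: 𝒳 ⊆ ℝ^p convex with ‖x − y‖ ≤ R for all x, y ∈ 𝒳 (R > 0); loss functions f_t : 𝒳 → ℝ admitting gradient/subgradient maps ∇f_t with ‖∇f_t(x)‖ ≤ D and, for some μ > 0, f_t(y) ≥ f_t(x) + ⟨∇f_t(x), y − x⟩ + μ·‖y − x‖² for all x, y ∈ 𝒳 and all t; convex constraint functions g_t^n : 𝒳 → ℝ (1 ≤ n ≤ N) with |g_t^n(x)| ≤ G on 𝒳; a nondecreasing sequence α_t > 0 with α_1 ≥ μ; nonnegative queue values Q_{t−1}^n ≥ 0; x_1 ∈ 𝒳 arbitrary, and for t ∈ {2,…,T}: x_t minimizes over 𝒳 the function Φ_t(x) = ⟨∇f_{t−1}(x_{t−1}), x − x_{t−1}⟩ + α_{t−1}·‖x − x_{t−1}‖² + Σ_{n=1}^N Q_{t−1}^n·[g_{t−1}^n(x)]_+. Let x* ∈ 𝒳 satisfy g_t^n(x*) ≤ 0 for all t and n. Then the static regret satisfies Σ_{t=1}^T [f_t(x_t) − f_t(x*)] ≤ Σ_{t=2}^{T−1} (α_t −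 α_{t−1} − μ)·‖x* − x_t‖² + (D²/4)·Σ_{t=1}^T (1/α_t) + (α_1 − μ)·R² + D·R. -/

import Mathlib

/-!
Each iterate `x (t + 1)` minimizes a `2 α t`-strongly convex function (a convex penalty plus the
linearized loss plus `α t * ‖· - x t‖ ^ 2`), so its value at `xstar` exceeds the minimum by at
least `α t * ‖xstar - x (t + 1)‖ ^ 2`. The penalty vanishes at the feasible `xstar` and is
nonnegative at `x (t + 1)`; combining with the strong convexity of `f t` at `x t` and
`-⟪d, v⟫ - α ‖v‖² ≤ D² / (4 α)` bounds the regret of round `t` by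
`D² / (4 α t) + (α t - μ) ‖xstar - x t‖² - α t ‖xstar - x (t + 1)‖²`. These bounds telescope;
the last round is bounded by `D R` directly.
-/

open scoped RealInnerProductSpace Topology
open Filter

theorem convexOn_sum_mul_max_zero {E ι : Type*} [AddCommGroup E] [Module ℝ E] [Fintype ι]
    {s : Set E} (hs : Convex ℝ s) {g : ι → E → ℝ} (hg : ∀ i, ConvexOn ℝ s (g i)) {Q : ι → ℝ}
    (hQ : ∀ i, 0 ≤ Q i) :
    ConvexOn ℝ s fun z ↦ ∑ i, Q i * max (g i z) 0 := by
  have hsum := Finset.univ.sum_induction (fun i z ↦ Q i * max (g i z) 0) (ConvexOn ℝ s)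
    (fun _ _ ↦ ConvexOn.add) (convexOn_const 0 hs)
    fun i _ ↦ ((hg i).sup (convexOn_const 0 hs)).smul (hQ i)
  simpa only [Finset.sum_fn] using hsum

section InnerProductSpace

variable {E : Type*} [NormedAddCommGroup E] [InnerProductSpace ℝ E] {s : Set E}

theorem ConvexOn.strongConvexOn_add_mul_norm_sub_sq {L : E → ℝ} (hL : ConvexOn ℝ s L)
    (α : ℝ) (c : E) : StrongConvexOn s (2 * α) fun z ↦ L z + α * ‖z - c‖ ^ 2 := by
  have hshift : ConvexOn ℝ s fun z ↦ α * ‖c‖ ^ 2 - 2 * α * ⟪c, z⟫ := by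
    refine ⟨hL.1, fun z₁ _ z₂ _ a b _ _ hab ↦ le_of_eq ?_⟩
    simp only [inner_add_right, inner_smul_right, smul_eq_mul]
    linear_combination -α * ‖c‖ ^ 2 * hab
  rw [strongConvexOn_iff_convex]
  refine (hL.add hshift).congr fun z _ ↦ ?_
  rw [Pi.add_apply, norm_sub_sq_real, real_inner_comm c z]
  ring

theorem StrongConvexOn.add_le_of_isMinOn {m : ℝ} {f : E → ℝ} {w y : E}
    (hf : StrongConvexOn s m f) (hmin : IsMinOn f s w) (hw : w ∈ s) (hy : y ∈ s) :
    f w + m / 2 * ‖y - w‖ ^ 2 ≤ f y := by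
  set K := m / 2 * ‖y - w‖ ^ 2
  -- compare `w` with the points `(1 - t) • w + t • y` of the segment and let `t → 0`
  have hseg : ∀ t ∈ Set.Ioo (0 : ℝ) 1, f w ≤ f y - (1 - t) * K := by
    rintro t ⟨ht₀, ht₁⟩
    have hconv := hf.2 hw hy (sub_nonneg.2 ht₁.le) ht₀.le (sub_add_cancel 1 t)
    have hle : f w ≤ f ((1 - t) • w + t • y) :=
      hmin (hf.1 hw hy (sub_nonneg.2 ht₁.le) ht₀.le (sub_add_cancel 1 t))
    dsimp only at hconv
    rw [norm_sub_rev, smul_eq_mul, smul_eq_mul] at hconv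
    have hscaled : t * f w ≤ t * (f y - (1 - t) * K) := by linear_combination hle + hconv
    exact le_of_mul_le_mul_left hscaled ht₀
  have hlim : Tendsto (fun t : ℝ ↦ f y - (1 - t) * K) (𝓝[>] 0) (𝓝 (f y - K)) := by
    have hcont : Continuous fun t : ℝ ↦ f y - (1 - t) * K := by fun_prop
    simpa using (hcont.tendsto 0).mono_left nhdsWithin_le_nhds
  have := ge_of_tendsto hlim (eventually_of_mem (Ioo_mem_nhdsGT one_pos) hseg)
  linarith

theorem neg_inner_sub_mul_norm_sq_le {d v : E} {D α : ℝ} (hd : ‖d‖ ≤ D) (hα : 0 < α) :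
    -⟪d, v⟫ - α * ‖v‖ ^ 2 ≤ D ^ 2 / (4 * α) := by
  have hcs : -⟪d, v⟫ ≤ D * ‖v‖ := by
    calc -⟪d, v⟫ ≤ ‖d‖ * ‖v‖ := (neg_le_abs _).trans (abs_real_inner_le_norm d v)
      _ ≤ D * ‖v‖ := by gcongr
  rw [le_div_iff₀ (by positivity)]
  nlinarith [sq_nonneg (D - 2 * α * ‖v‖)]

theorem sub_le_mul_of_strong_lower_bound {f : E → ℝ} {d x y : E} {μ D R : ℝ} (hμ : 0 ≤ μ)
    (hf : f x + ⟪d, y - x⟫ + μ * ‖y - x‖ ^ 2 ≤ f y) (hd : ‖d‖ ≤ D) (hyx : ‖y - x‖ ≤ R) :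
    f x - f y ≤ D * R := by
  have hcs : -⟪d, y - x⟫ ≤ D * R := by
    calc -⟪d, y - x⟫ ≤ ‖d‖ * ‖y - x‖ := (neg_le_abs _).trans (abs_real_inner_le_norm d _)
      _ ≤ D * R := mul_le_mul hd hyx (norm_nonneg _) ((norm_nonneg d).trans hd)
  nlinarith [sq_nonneg ‖y - x‖]

theorem sub_le_of_linearized_proximal_step {f P : E → ℝ} {d x x' y : E} {μ α D : ℝ}
    (hP : ConvexOn ℝ s P) (hPx' : 0 ≤ P x') (hPy : P y ≤ 0) (hα : 0 < α) (hd : ‖d‖ ≤ D)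
    (hf : f x + ⟪d, y - x⟫ + μ * ‖y - x‖ ^ 2 ≤ f y) (hx' : x' ∈ s) (hy : y ∈ s)
    (hmin : ∀ z ∈ s,
      ⟪d, x' - x⟫ + α * ‖x' - x‖ ^ 2 + P x' ≤ ⟪d, z - x⟫ + α * ‖z - x‖ ^ 2 + P z) :
    f x - f y ≤ D ^ 2 / (4 * α) + (α - μ) * ‖y - x‖ ^ 2 - α * ‖y - x'‖ ^ 2 := by
  set F : E → ℝ := fun z ↦ (P z + (⟪d, z⟫ + -⟪d, x⟫)) + α * ‖z - x‖ ^ 2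
  have hL : ConvexOn ℝ s fun z ↦ P z + (⟪d, z⟫ + -⟪d, x⟫) :=
    hP.add (((innerₛₗ ℝ d).convexOn hP.1).add_const _)
  have hF : StrongConvexOn s (2 * α) F := hL.strongConvexOn_add_mul_norm_sub_sq α x
  have hFmin : IsMinOn F s x' := isMinOn_iff.2 fun z hz ↦ by
    have := hmin z hz
    simp only [F, inner_sub_right] at this ⊢
    linarith
  have hthree := hF.add_le_of_isMinOn hFmin hx' hy
  have hstep := neg_inner_sub_mul_norm_sq_le (v := x' - x) hd hα
  simp only [F, inner_sub_right] at hthree hstep hf ⊢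
  linarith

end InnerProductSpace

open Finset in
theorem sum_Icc_weighted_telescope (α a : ℕ → ℝ) (μ : ℝ) {m : ℕ} (hm : 1 ≤ m) :
    ∑ t ∈ Icc 1 m, ((α t - μ) * a t - α t * a (t + 1)) =
      (α 1 - μ) * a 1 + ∑ t ∈ Icc 2 m, (α t - α (t - 1) - μ) * a t - α m * a (m + 1) := by
  induction m, hm using Nat.le_induction with
  | base => simp
  | succ n hn ih =>
    rw [sum_Icc_succ_top (by omega), sum_Icc_succ_top (by omega : 2 ≤ n + 1), ih,
      Nat.add_sub_cancel]
    ring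

open Finset in
theorem sum_Icc_le_of_step_bounds {r α a : ℕ → ℝ} {μ D R : ℝ} {T : ℕ} (hT : 1 ≤ T)
    (hα : ∀ t, 0 < α t) (hα1 : μ ≤ α 1) (ha : ∀ t, 0 ≤ a t) (ha1 : a 1 ≤ R ^ 2)
    (hstep : ∀ t, 1 ≤ t → t + 1 ≤ T →
      r t ≤ D ^ 2 / (4 * α t) + (α t - μ) * a t - α t * a (t + 1))
    (hlast : r T ≤ D * R) :
    ∑ t ∈ Icc 1 T, r t ≤
      ∑ t ∈ Icc 2 (T - 1), (α t - α (t - 1) - μ) * a t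
        + (D ^ 2 / 4) * ∑ t ∈ Icc 1 T, (1 / α t) + (α 1 - μ) * R ^ 2 + D * R := by
  obtain ⟨S, rfl⟩ : ∃ S, T = S + 1 := ⟨T - 1, by omega⟩
  rw [Nat.add_sub_cancel, sum_Icc_succ_top (by omega), sum_Icc_succ_top (by omega), mul_add]
  have hlast_gap : 0 ≤ D ^ 2 / 4 * (1 / α (S + 1)) := by have := hα (S + 1); positivity
  have hinit : (α 1 - μ) * a 1 ≤ (α 1 - μ) * R ^ 2 := by gcongr
  rcases Nat.eq_zero_or_pos S with rfl | hS
  · rw [Icc_eq_empty_of_lt zero_lt_one, Icc_eq_empty_of_lt zero_lt_two, sum_empty, sum_empty]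
    linarith [mul_nonneg (sub_nonneg.2 hα1) (ha 1)]
  have hsteps : ∑ t ∈ Icc 1 S, r t ≤ D ^ 2 / 4 * ∑ t ∈ Icc 1 S, 1 / α t
      + ∑ t ∈ Icc 1 S, ((α t - μ) * a t - α t * a (t + 1)) := by
    rw [mul_sum, ← sum_add_distrib]
    refine sum_le_sum fun t ht ↦ ?_
    rw [mem_Icc] at ht
    have := hstep t ht.1 (by omega)
    rw [div_mul_div_comm, mul_one]
    linarith
  rw [sum_Icc_weighted_telescope α a μ hS] at hsteps
  linarith [mul_nonneg (hα S).le (ha (S + 1))]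

theorem coldq_static_regret_strongly_convex_general
    (p N T : ℕ) (hT : 1 ≤ T) (R D μ : ℝ)
    (hμ : 0 < μ)
    (𝒳 : Set (EuclideanSpace ℝ (Fin p)))
    (hXconv : Convex ℝ 𝒳)
    (hXbdd : ∀ x ∈ 𝒳, ∀ y ∈ 𝒳, ‖x - y‖ ≤ R)
    (f : ℕ → EuclideanSpace ℝ (Fin p) → ℝ)
    (gradf : ℕ → EuclideanSpace ℝ (Fin p) → EuclideanSpace ℝ (Fin p))
    (hgradD : ∀ t, ∀ x ∈ 𝒳, ‖gradf t x‖ ≤ D)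
    (hstrong : ∀ t, ∀ x ∈ 𝒳, ∀ y ∈ 𝒳,
      f t x + ⟪gradf t x, y - x⟫ + μ * ‖y - x‖ ^ 2 ≤ f t y)
    (g : ℕ → Fin N → EuclideanSpace ℝ (Fin p) → ℝ)
    (hgconv : ∀ t n, ConvexOn ℝ 𝒳 (g t n))
    (α : ℕ → ℝ) (hαpos : ∀ t, 0 < α t)
    (hα1 : μ ≤ α 1)
    (Q : ℕ → Fin N → ℝ) (hQnn : ∀ t n, 0 ≤ Q t n)
    (x : ℕ → EuclideanSpace ℝ (Fin p)) (hx1 : x 1 ∈ 𝒳)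
    (hxX : ∀ t, 2 ≤ t → t ≤ T → x t ∈ 𝒳)
    (hxmin : ∀ t, 2 ≤ t → t ≤ T → ∀ y ∈ 𝒳,
      ⟪gradf (t - 1) (x (t - 1)), x t - x (t - 1)⟫
          + α (t - 1) * ‖x t - x (t - 1)‖ ^ 2
          + ∑ n, Q (t - 1) n * max (g (t - 1) n (x t)) 0 ≤
        ⟪gradf (t - 1) (x (t - 1)), y - x (t - 1)⟫
          + α (t - 1) * ‖y - x (t - 1)‖ ^ 2
          + ∑ n, Q (t - 1) n * max (g (t - 1) n y) 0)
    (xstar : EuclideanSpace ℝ (Fin p)) (hxstarX : xstar ∈ 𝒳)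
    (hxstarfeas : ∀ t, 1 ≤ t → t ≤ T → ∀ n, g t n xstar ≤ 0) :
    ∑ t ∈ Finset.Icc 1 T, (f t (x t) - f t xstar) ≤
      ∑ t ∈ Finset.Icc 2 (T - 1), (α t - α (t - 1) - μ) * ‖xstar - x t‖ ^ 2
        + (D ^ 2 / 4) * ∑ t ∈ Finset.Icc 1 T, (1 / α t)
        + (α 1 - μ) * R ^ 2 + D * R := by
  have hx : ∀ t, 1 ≤ t → t ≤ T → x t ∈ 𝒳 := fun t ht htT ↦
    (eq_or_lt_of_le ht).elim (fun h ↦ h ▸ hx1) fun h ↦ hxX t h htT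
  refine sum_Icc_le_of_step_bounds hT hαpos hα1 (fun t ↦ sq_nonneg _)
    (pow_le_pow_left₀ (norm_nonneg _) (hXbdd _ hxstarX _ hx1) 2) (fun t ht htT ↦ ?_)
    (sub_le_mul_of_strong_lower_bound hμ.le (hstrong T _ (hx T hT le_rfl) _ hxstarX)
      (hgradD T _ (hx T hT le_rfl)) (hXbdd _ hxstarX _ (hx T hT le_rfl)))
  have hmin := hxmin (t + 1) (by omega) htT
  rw [Nat.add_sub_cancel] at hmin
  refine sub_le_of_linearized_proximal_step
    (convexOn_sum_mul_max_zero hXconv (hgconv t) (hQnn t))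
    (Finset.sum_nonneg fun n _ ↦ mul_nonneg (hQnn t n) (le_max_right _ _))
    (Finset.sum_nonpos fun n _ ↦ ?_) (hαpos t) (hgradD t _ (hx t ht (by omega)))
    (hstrong t _ (hx t ht (by omega)) _ hxstarX) (hxX (t + 1) (by omega) htT) hxstarX hmin
  rw [max_eq_right (hxstarfeas t ht (by omega) n), mul_zero]

/-- Static regret bound of COLDQ for strongly convex losses (Theorem 3). -/
theorem coldq_static_regret_strongly_convex
    (p N T : ℕ) (hT : 1 ≤ T) (R D G μ : ℝ)
    (hR : 0 < R) (hμ : 0 < μ)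
    (𝒳 : Set (EuclideanSpace ℝ (Fin p)))
    (hXconv : Convex ℝ 𝒳)
    (hXbdd : ∀ x ∈ 𝒳, ∀ y ∈ 𝒳, ‖x - y‖ ≤ R)
    (f : ℕ → EuclideanSpace ℝ (Fin p) → ℝ)
    (gradf : ℕ → EuclideanSpace ℝ (Fin p) → EuclideanSpace ℝ (Fin p))
    (hgradD : ∀ t, ∀ x ∈ 𝒳, ‖gradf t x‖ ≤ D)
    (hstrong : ∀ t, ∀ x ∈ 𝒳, ∀ y ∈ 𝒳,
      f t x + ⟪gradf t x, y - x⟫ + μ * ‖y - x‖ ^ 2 ≤ f t y)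
    (g : ℕ → Fin N → EuclideanSpace ℝ (Fin p) → ℝ)
    (hgconv : ∀ t n, ConvexOn ℝ 𝒳 (g t n))
    (hgG : ∀ t n, ∀ x ∈ 𝒳, |g t n x| ≤ G)
    (α : ℕ → ℝ) (hαpos : ∀ t, 0 < α t) (hαmono : Monotone α)
    (hα1 : μ ≤ α 1)
    (Q : ℕ → Fin N → ℝ) (hQnn : ∀ t n, 0 ≤ Q t n)
    (x : ℕ → EuclideanSpace ℝ (Fin p)) (hx1 : x 1 ∈ 𝒳)
    (hxX : ∀ t, 2 ≤ t → t ≤ T → x t ∈ 𝒳)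
    (hxmin : ∀ t, 2 ≤ t → t ≤ T → ∀ y ∈ 𝒳,
      ⟪gradf (t - 1) (x (t - 1)), x t - x (t - 1)⟫
          + α (t - 1) * ‖x t - x (t - 1)‖ ^ 2
          + ∑ n, Q (t - 1) n * max (g (t - 1) n (x t)) 0 ≤
        ⟪gradf (t - 1) (x (t - 1)), y - x (t - 1)⟫
          + α (t - 1) * ‖y - x (t - 1)‖ ^ 2
          + ∑ n, Q (t - 1) n * max (g (t - 1) n y) 0)
    (xstar : EuclideanSpace ℝ (Fin p)) (hxstarX : xstar ∈ 𝒳)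
    (hxstarfeas : ∀ t, 1 ≤ t → t ≤ T → ∀ n, g t n xstar ≤ 0) :
    ∑ t ∈ Finset.Icc 1 T, (f t (x t) - f t xstar) ≤
      ∑ t ∈ Finset.Icc 2 (T - 1), (α t - α (t - 1) - μ) * ‖xstar - x t‖ ^ 2
        + (D ^ 2 / 4) * ∑ t ∈ Finset.Icc 1 T, (1 / α t)
        + (α 1 - μ) * R ^ 2 + D * R :=
  coldq_static_regret_strongly_convex_general p N T hT R D μ hμ 𝒳 hXconv hXbdd f gradf hgradD
    hstrong g hgconv α hαpos hα1 Q hQnn x hx1 hxX hxmin xstar hxstarX hxstarfeas
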